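/- Let p be a prime, e ≥ 1, and A, B ∈ R = ℤ/p^eℤ. If (X, Y, Z) ∈ R³ is a primitive triple satisfying the Weierstrass equation Y²·Z = X³ + A·X·Z² + B·Z³ and Z is not a unit of R, then p divides X, p divides Z, and Y is a unit of R. (Hence every projective point of the curve either has a representative with last coordinate 1, or is a point at infinity with a representative of the form (X : 1 : Z) with p ∣ X and p ∣ Z.) -/
import Mathlib

lemma zmod_p_not_unit {p : ℕ} (hp : p.Prime) {e : ℕ} (he : 1 ≤ e) :
    ¬ IsUnit ((p : ZMod (p ^ e))) := by
  rw [ZMod.isUnit_iff_coprime]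
  intro h
  have hd : p ∣ p ^ e := dvd_pow_self p (by omega)
  have h1 : p = 1 := Nat.eq_one_of_dvd_coprimes h dvd_rfl hd
  exact hp.one_lt.ne' h1

lemma zmod_not_isUnit_iff_dvd {p : ℕ} (hp : p.Prime) {e : ℕ} (he : 1 ≤ e)
    (x : ZMod (p ^ e)) : ¬ IsUnit x ↔ (p : ZMod (p ^ e)) ∣ x := by
  haveI : NeZero (p ^ e) := ⟨pow_ne_zero e hp.pos.ne'⟩
  constructor
  · intro hx
    have hxe : x = ((x.val : ℕ) : ZMod (p ^ e)) := (ZMod.natCast_rightInverse x).symm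
    rw [hxe, ZMod.isUnit_iff_coprime] at hx
    have hdvd : p ∣ x.val := by
      by_contra h
      exact hx (Nat.Coprime.pow_right e ((Nat.Prime.coprime_iff_not_dvd hp).mpr h).symm)
    obtain ⟨m, hm⟩ := hdvd
    exact ⟨(m : ZMod (p ^ e)), by rw [hxe, hm]; push_cast; ring⟩
  · rintro ⟨c, rfl⟩ h
    exact zmod_p_not_unit hp he (isUnit_of_mul_isUnit_left h)

/-- A primitive Weierstrass point over `ℤ/p^eℤ` whose last coordinate is not a unit
satisfies `p ∣ X`, `p ∣ Z` and has unit `Y`-coordinate (point at infinity shape). -/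
theorem weierstrass_point_at_infinity_shape
    {p : ℕ} (hp : p.Prime) {e : ℕ} (he : 1 ≤ e)
    (A B X Y Z : ZMod (p ^ e))
    (hprim : Ideal.span ({X, Y, Z} : Set (ZMod (p ^ e))) = ⊤)
    (heq : Y ^ 2 * Z = X ^ 3 + A * X * Z ^ 2 + B * Z ^ 3)
    (hZ : ¬ IsUnit Z) :
    (p : ZMod (p ^ e)) ∣ X ∧ (p : ZMod (p ^ e)) ∣ Z ∧ IsUnit Y := by
  have hpZ : (p : ZMod (p ^ e)) ∣ Z := (zmod_not_isUnit_iff_dvd hp he Z).mp hZ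
  have hX3 : (p : ZMod (p ^ e)) ∣ X ^ 3 := by
    have h3 : X ^ 3 = Y ^ 2 * Z - A * X * Z ^ 2 - B * Z ^ 3 := by linear_combination -heq
    rw [h3]
    exact dvd_sub (dvd_sub (hpZ.mul_left _) ((dvd_pow hpZ two_ne_zero).mul_left _))
      ((dvd_pow hpZ three_ne_zero).mul_left _)
  have hpX : (p : ZMod (p ^ e)) ∣ X := by
    rw [← zmod_not_isUnit_iff_dvd hp he] at hX3 ⊢
    exact fun h => hX3 (h.pow 3)
  refine ⟨hpX, hpZ, ?_⟩
  by_contra hY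
  have hpY : (p : ZMod (p ^ e)) ∣ Y := (zmod_not_isUnit_iff_dvd hp he Y).mp hY
  have hle : Ideal.span ({X, Y, Z} : Set (ZMod (p ^ e))) ≤
      Ideal.span ({(p : ZMod (p ^ e))} : Set (ZMod (p ^ e))) := by
    rw [Ideal.span_le]
    rintro x (rfl | rfl | rfl) <;> rw [SetLike.mem_coe, Ideal.mem_span_singleton]
    exacts [hpX, hpY, hpZ]
  rw [hprim, top_le_iff, Ideal.eq_top_iff_one, Ideal.mem_span_singleton] at hle
  exact zmod_p_not_unit hp he (isUnit_of_dvd_one hle)
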